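/- arXiv:1905.12086 — 3 statements merged into one kernel-verified Lean document; each statement's English description precedes it below -/
import Mathlib

section
/- For an isolated stationary contact discontinuity (u_L = u_R = 0, p_L = p_R = p, arbitrary densities ρ_L ≠ ρ_R) for the Euler equations with ideal gas EOS, the Linde flux with β = 1 and symmetric wave speeds S_L = -c, S_R = c (c > 0) produces intermediate fluxes F*_L = F*_R = F_L = F_R = (0, p, 0); hence the discontinuity is exactly preserved. -/
/-!
At a stationary contact the two fluxes agree and the contact speed vanishes. For any wave speeds
`S_L ≠ S_R` the HLL state is then `(S_R U_R - S_L U_L)/(S_R - S_L)`, and the Linde corrections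
with `ω_R = S_R/(S_R - S_L)`, `ω_L = -S_L/(S_R - S_L)` move it exactly back to `U_L` and `U_R`,
whatever the states are. So the star fluxes reduce to `F_L = F_R = (0, p, 0)`.
-/

section Linde

variable {K V : Type*} [Field K] [AddCommGroup V] [Module K V]

def hllState (SL SR : K) (UL UR FL FR : V) : V :=
  (SL - SR)⁻¹ • (FR - FL + SL • UL - SR • UR)

def lindeStarLeft (SL SR SM : K) (UL UR FL FR : V) : V :=
  hllState SL SR UL UR FL FR - ((SR - SM) / (SR - SL)) • (UR - UL)

def lindeStarRight (SL SR SM : K) (UL UR FL FR : V) : V :=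
  hllState SL SR UL UR FL FR + ((SM - SL) / (SR - SL)) • (UR - UL)

theorem hllState_of_flux_eq (SL SR : K) (UL UR F : V) :
    hllState SL SR UL UR F F = (SR - SL)⁻¹ • (SR • UR - SL • UL) := by
  rw [hllState, sub_self, zero_add, ← neg_sub SR SL, inv_neg, neg_smul, ← smul_neg, neg_sub]

theorem lindeStarLeft_of_stationary {SL SR : K} (hS : SL ≠ SR) (UL UR F : V) :
    lindeStarLeft SL SR 0 UL UR F F = UL := by
  have hS' : SR - SL ≠ 0 := sub_ne_zero.mpr hS.symm
  rw [lindeStarLeft, hllState_of_flux_eq, sub_zero, div_eq_inv_mul, mul_smul, ← smul_sub]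
  rw [show SR • UR - SL • UL - SR • (UR - UL) = (SR - SL) • UL by module, smul_smul,
    inv_mul_cancel₀ hS', one_smul]

theorem lindeStarRight_of_stationary {SL SR : K} (hS : SL ≠ SR) (UL UR F : V) :
    lindeStarRight SL SR 0 UL UR F F = UR := by
  have hS' : SR - SL ≠ 0 := sub_ne_zero.mpr hS.symm
  rw [lindeStarRight, hllState_of_flux_eq, zero_sub, div_eq_inv_mul, mul_smul, ← smul_add]
  rw [show SR • UR - SL • UL + -SL • (UR - UL) = (SR - SL) • UR by module, smul_smul,
    inv_mul_cancel₀ hS', one_smul]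

end Linde

theorem linde_preserves_stationary_contact_general
    (γ p c ρL ρR SL SR SM ωL ωR : ℝ)
    (UL UR FL FR UHLL ULs URs FLs FRs : Fin 3 → ℝ)
    (hc : 0 < c)
    -- fluxes F = (ρu, ρu² + p, (ρE + p)u) with u = 0
    (hFL : FL = ![ρL * 0, ρL * 0 ^ 2 + p, (p / (γ - 1) + ρL * 0 ^ 2 / 2 + p) * 0])
    (hFR : FR = ![ρR * 0, ρR * 0 ^ 2 + p, (p / (γ - 1) + ρR * 0 ^ 2 / 2 + p) * 0])
    (hSL : SL = -c) (hSR : SR = c)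
    (hUHLL : UHLL = (SL - SR)⁻¹ • (FR - FL + SL • UL - SR • UR))
    (hSM : SM = (p - p + ρL * 0 * (SL - 0) - ρR * 0 * (SR - 0)) /
      (ρL * (SL - 0) - ρR * (SR - 0)))
    (hωR : ωR = (SR - SM) / (SR - SL)) (hωL : ωL = (SM - SL) / (SR - SL))
    (hULs : ULs = UHLL - ωR • (UR - UL))
    (hURs : URs = UHLL + ωL • (UR - UL))
    (hFLs : FLs = FL + SL • (ULs - UL))
    (hFRs : FRs = FR + SR • (URs - UR)) :
    FLs = ![0, p, 0] ∧ FRs = ![0, p, 0] ∧ FL = ![0, p, 0] ∧ FR = ![0, p, 0] := by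
  have hS : SL ≠ SR := by rw [hSL, hSR]; linarith
  have hFL0 : FL = ![0, p, 0] := by rw [hFL]; simp
  have hFR0 : FR = ![0, p, 0] := by rw [hFR]; simp
  have hSM0 : SM = 0 := by simp [hSM]
  have hULs' : ULs = UL := by
    rw [hULs, hUHLL, hωR, hSM0, hFL0, hFR0]
    exact lindeStarLeft_of_stationary hS UL UR _
  have hURs' : URs = UR := by
    rw [hURs, hUHLL, hωL, hSM0, hFL0, hFR0]
    exact lindeStarRight_of_stationary hS UL UR _
  refine ⟨?_, ?_, hFL0, hFR0⟩
  · rw [hFLs, hULs', sub_self, smul_zero, add_zero, hFL0]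
  · rw [hFRs, hURs', sub_self, smul_zero, add_zero, hFR0]

/-- Linde solver with β = 1 exactly preserves a stationary contact discontinuity of
the Euler equations with ideal gas EOS: all fluxes equal (0, p, 0). -/
theorem linde_preserves_stationary_contact
    (γ p c ρL ρR SL SR SM ωL ωR : ℝ)
    (UL UR FL FR UHLL ULs URs FLs FRs : Fin 3 → ℝ)
    (hγ : 1 < γ) (hc : 0 < c) (hρL : 0 < ρL) (hρR : 0 < ρR) (hne : ρL ≠ ρR)
    -- conservative states, with u = 0 and ρe = p/(γ-1)
    (hUL : UL = ![ρL, ρL * 0, p / (γ - 1) + ρL * 0 ^ 2 / 2])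
    (hUR : UR = ![ρR, ρR * 0, p / (γ - 1) + ρR * 0 ^ 2 / 2])
    -- fluxes F = (ρu, ρu² + p, (ρE + p)u) with u = 0
    (hFL : FL = ![ρL * 0, ρL * 0 ^ 2 + p, (p / (γ - 1) + ρL * 0 ^ 2 / 2 + p) * 0])
    (hFR : FR = ![ρR * 0, ρR * 0 ^ 2 + p, (p / (γ - 1) + ρR * 0 ^ 2 / 2 + p) * 0])
    (hSL : SL = -c) (hSR : SR = c)
    (hUHLL : UHLL = (SL - SR)⁻¹ • (FR - FL + SL • UL - SR • UR))
    (hSM : SM = (p - p + ρL * 0 * (SL - 0) - ρR * 0 * (SR - 0)) /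
      (ρL * (SL - 0) - ρR * (SR - 0)))
    (hωR : ωR = (SR - SM) / (SR - SL)) (hωL : ωL = (SM - SL) / (SR - SL))
    (hULs : ULs = UHLL - ωR • (UR - UL))
    (hURs : URs = UHLL + ωL • (UR - UL))
    (hFLs : FLs = FL + SL • (ULs - UL))
    (hFRs : FRs = FR + SR • (URs - UR)) :
    FLs = ![0, p, 0] ∧ FRs = ![0, p, 0] ∧ FL = ![0, p, 0] ∧ FR = ![0, p, 0] :=
  linde_preserves_stationary_contact_general γ p c ρL ρR SL SR SM ωL ωR UL UR FL FR UHLL ULs URs FLs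
    FRs hc hFL hFR hSL hSR hUHLL hSM hωR hωL hULs hURs hFLs hFRs
end

section
/- In the RSIR reconstruction for the Euler equations with ideal gas EOS, if the initial data is an isolated contact discontinuity (u_L = u_R = u, p_L = p_R = p, ρ_L ≠ ρ_R) then ψ = β(ρ_R - ρ_L + (p_L - p_R)/c̄²) reduces to β(ρ_R - ρ_L), and with β = 1 the reconstructed jump vector ψ·(1, S_M, S_M²/2) with S_M = u equals the exact jump (ρ_R - ρ_L)(1, u, u²/2) of the conservative variables across the contact when temperatures adjust so that internal energies ρ_L e_L = ρ_R e_R. -/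
/-! With equal pressures the correction term `(p_L - p_R) / c̄²` vanishes, so `ψ = β (ρ_R - ρ_L)`.
Mass and momentum jump by `Δρ` and `Δρ u`; in the energy row the internal-energy densities
`ρ e` cancel, leaving `Δρ u² / 2`. -/

theorem conservative_jump_eq_smul_of_contact {𝕜 : Type*} [Field 𝕜] (ρL ρR u eL eR : 𝕜)
    (he : ρL * eL = ρR * eR) :
    (![ρR, ρR * u, ρR * (eR + u ^ 2 / 2)] - ![ρL, ρL * u, ρL * (eL + u ^ 2 / 2)] : Fin 3 → 𝕜) =
      (ρR - ρL) • ![1, u, u ^ 2 / 2] := by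
  ext i
  fin_cases i
  · simp
  · simp [sub_mul]
  · simp only [Fin.reduceFinMk, Pi.sub_apply, Matrix.cons_val, Pi.smul_apply, smul_eq_mul]
    linear_combination -he

theorem rsir_exact_on_contact_general (ρL ρR u p cbar2 β eL eR : ℝ)
    (hβ : β = 1)
    (he : ρL * eL = ρR * eR) :
    let ψ := β * (ρR - ρL + (p - p) / cbar2)
    ψ = β * (ρR - ρL) ∧
    (![ρR, ρR * u, ρR * (eR + u ^ 2 / 2)] - ![ρL, ρL * u, ρL * (eL + u ^ 2 / 2)]
      : Fin 3 → ℝ) = ψ • ![1, u, u ^ 2 / 2] := by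
  intro ψ
  have hψ : ψ = β * (ρR - ρL) := by simp only [ψ, sub_self, zero_div, add_zero]
  refine ⟨hψ, ?_⟩
  rw [hψ, hβ, one_mul]
  exact conservative_jump_eq_smul_of_contact ρL ρR u eL eR he

/-- RSIR reconstruction is exact on an isolated contact discontinuity of the Euler
equations with ideal gas EOS. -/
theorem rsir_exact_on_contact (γ ρL ρR u p cbar2 β eL eR : ℝ)
    (hγ : 1 < γ) (hρL : 0 < ρL) (hρR : 0 < ρR) (hc : 0 < cbar2) (hβ : β = 1)
    (heL : p = (γ - 1) * ρL * eL) (heR : p = (γ - 1) * ρR * eR)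
    (he : ρL * eL = ρR * eR) :
    let ψ := β * (ρR - ρL + (p - p) / cbar2)
    ψ = β * (ρR - ρL) ∧
    (![ρR, ρR * u, ρR * (eR + u ^ 2 / 2)] - ![ρL, ρL * u, ρL * (eL + u ^ 2 / 2)]
      : Fin 3 → ℝ) = ψ • ![1, u, u ^ 2 / 2] :=
  rsir_exact_on_contact_general ρL ρR u p cbar2 β eL eR hβ he
end

section
/- For the stiffened gas EOS p = (γ-1)ρe - γp_∞ (γ > 1, p_∞ ≥ 0), the momentum interface condition (αρ)*₂R S_{M2}(S_{M2} - S_{M1}) + α*₂R(p*₂R - p_I) = (αρ)*₂L S_{M2}(S_{M2} - S_{M1}) + α*₂L(p*₂L - p_I) implies the total energy jump (αρE)*₂R - (αρE)*₂L = [(αρ)*₂R - (αρ)*₂L][S²_{M2}/2 - S_{M2}(S_{M2} - S_{M1})/(γ-1)] + (α*₂R - α*₂L)(p_I + γp_∞)/(γ-1), where E = e + S²_{M2}/2 on both sides (both states move at speed S_{M2}). -/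
theorem phase2_energy_jump_general (γ pinf pI SM1 SM2 : ℝ)
    (αR αL aR aL pRs pLs eR eL ER EL : ℝ)
    -- (αρe)*₂K = α*₂K (p*₂K + γ p_∞)/(γ-1)  (stiffened gas)
    (heR : eR = αR * (pRs + γ * pinf) / (γ - 1))
    (heL : eL = αL * (pLs + γ * pinf) / (γ - 1))
    -- total energies: both states move at speed S_M2
    (hER : ER = eR + aR * SM2 ^ 2 / 2) (hEL : EL = eL + aL * SM2 ^ 2 / 2)
    -- momentum interface condition
    (hmom : aR * SM2 * (SM2 - SM1) + αR * (pRs - pI)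
          = aL * SM2 * (SM2 - SM1) + αL * (pLs - pI)) :
    ER - EL = (aR - aL) * (SM2 ^ 2 / 2 - SM2 * (SM2 - SM1) / (γ - 1))
      + (αR - αL) * (pI + γ * pinf) / (γ - 1) := by
  subst heR heL hER hEL
  -- The kinetic terms cancel; what remains is the momentum condition divided by `γ - 1`.
  linear_combination hmom / (γ - 1)

/-- For the stiffened gas EOS, the phase-2 momentum interface condition implies the
total energy jump relation across the contact wave. -/
theorem phase2_energy_jump (γ pinf pI SM1 SM2 : ℝ) (hγ : 1 < γ) (hpinf : 0 ≤ pinf)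
    (αR αL aR aL pRs pLs eR eL ER EL : ℝ)
    -- (αρe)*₂K = α*₂K (p*₂K + γ p_∞)/(γ-1)  (stiffened gas)
    (heR : eR = αR * (pRs + γ * pinf) / (γ - 1))
    (heL : eL = αL * (pLs + γ * pinf) / (γ - 1))
    -- total energies: both states move at speed S_M2
    (hER : ER = eR + aR * SM2 ^ 2 / 2) (hEL : EL = eL + aL * SM2 ^ 2 / 2)
    -- momentum interface condition
    (hmom : aR * SM2 * (SM2 - SM1) + αR * (pRs - pI)
          = aL * SM2 * (SM2 - SM1) + αL * (pLs - pI)) :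
    ER - EL = (aR - aL) * (SM2 ^ 2 / 2 - SM2 * (SM2 - SM1) / (γ - 1))
      + (αR - αL) * (pI + γ * pinf) / (γ - 1) :=
  phase2_energy_jump_general γ pinf pI SM1 SM2 αR αL aR aL pRs pLs eR eL ER EL heR heL hER hEL hmom
end
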